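/- Assume the abc-type bound: there is κ > 0 such that for all coprime positive integers a, b, c with a + b = c and all τ > 0 with a ≤ c / exp((log c)^τ · log₂*(c)), one has log c ≤ exp(τ⁻¹ κ · (log₃* rad(bc) / log₂* rad(bc)) · log rad(bc)). Then for pairwise coprime nonzero integers x₁, x₂, x₃, x₄ with x₁ + x₂ + x₃ + x₄ = 0, H = max_j |x_j|, R = rad(x₁x₂x₃x₄), and τ > 0 such that min_{i<j} |x_i + x_j| ≤ H / exp((log H)^τ · log₂*(H)), one has log H ≤ exp(τ⁻¹ κ · (log₃* R / log₂* R) · log R). -/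

import Mathlib

/-!
Let `x m` be an entry of maximal absolute value `H` and `{i, j}` the pair with `x i + x j` small.
Since the four entries sum to zero, `|x i + x j|` is also the absolute value of the sum over the
complementary pair, and one of these two pairs contains `m`; call its other element `q`. Then
`|x m + x q| + |x q| = |x m| = H` is a coprime `abc`-triple whose smallest term is tiny, so the
hypothesis bounds `log H` in terms of `rad (x q * x m)`. This radical divides `R`, and
`r ↦ log₃* r / log₂* r · log r` is nondecreasing on the integers `r ≥ 1`, so the bound persists
with `R` in its place.
-/

/-- The radical of a nonzero integer: product of the distinct prime divisors
of its absolute value. -/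
def rad (n : ℤ) : ℕ := ∏ p ∈ n.natAbs.primeFactors, p

/-- `log₂*(t) = max(1, log log t)`. -/
noncomputable def log2star (t : ℝ) : ℝ := max 1 (Real.log (Real.log t))

/-- `log₃*(t) = max(1, log log log t)`. -/
noncomputable def log3star (t : ℝ) : ℝ := max 1 (Real.log (Real.log (Real.log t)))

open Real

def AbcTypeBound (κ : ℝ) : Prop :=
  ∀ a b c : ℕ, 0 < a → 0 < b → Nat.Coprime a b → a + b = c →
    ∀ τ : ℝ, 0 < τ →
    (a : ℝ) ≤ (c : ℝ) / exp ((log c) ^ τ * log2star c) →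
    log c ≤
      exp (τ⁻¹ * κ *
        (log3star (rad (b * c : ℤ)) / log2star (rad (b * c : ℤ))) *
        log (rad (b * c : ℤ)))

lemma rad_pos (n : ℤ) : 0 < rad n :=
  Finset.prod_pos fun _ hp ↦ (Nat.prime_of_mem_primeFactors hp).pos

lemma rad_congr {m n : ℤ} (h : m.natAbs = n.natAbs) : rad m = rad n := by
  rw [rad, rad, h]

lemma rad_dvd_rad {m n : ℤ} (h : m ∣ n) (hn : n ≠ 0) : rad m ∣ rad n :=
  Finset.prod_dvd_prod_of_subset _ _ _ <|
    Nat.primeFactors_mono (Int.natAbs_dvd_natAbs.mpr h) (Int.natAbs_ne_zero.mpr hn)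

lemma one_le_log2star (t : ℝ) : 1 ≤ log2star t := le_max_left _ _

lemma one_le_log3star (t : ℝ) : 1 ≤ log3star t := le_max_left _ _

-- `log` is `log |·|` on negatives, so the bound `-1 ≤ a` is what makes this monotone.
lemma max_one_log_le_max_one_log {a b : ℝ} (ha : -1 ≤ a) (hab : a ≤ b) :
    max 1 (log a) ≤ max 1 (log b) := by
  rcases le_or_gt (log a) 1 with h | h
  · exact max_le (le_max_left _ _) (h.trans (le_max_left _ _))
  have ha₀ : 0 < a := by
    by_contra! ha₀
    have : log a ≤ 0 := by
      rw [← log_abs]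
      exact log_nonpos (abs_nonneg a) (abs_le.2 ⟨by linarith, by linarith⟩)
    linarith
  exact max_le_max le_rfl (log_le_log ha₀ hab)

lemma log2star_mono {s t : ℝ} (hs : exp (-1) ≤ s) (hst : s ≤ t) : log2star s ≤ log2star t :=
  have hs₀ : 0 < s := (exp_pos _).trans_le hs
  max_one_log_le_max_one_log ((le_log_iff_exp_le hs₀).2 hs) (log_le_log hs₀ hst)

lemma log3star_mono {s t : ℝ} (hs : exp (exp (-1)) ≤ s) (hst : s ≤ t) :
    log3star s ≤ log3star t :=
  have hs₀ : 0 < s := (exp_pos _).trans_le hs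
  log2star_mono ((le_log_iff_exp_le hs₀).2 hs) (log_le_log hs₀ hst)

lemma exp_exp_neg_one_le_two : exp (exp (-1)) ≤ 2 := by
  have : exp (-1) ≤ log 2 := by linarith [exp_neg_one_lt_d9, log_two_gt_d9]
  simpa [exp_log] using exp_le_exp.2 this

lemma div_log_monotoneOn : MonotoneOn (fun x ↦ x / log x) (Set.Ici (exp 1)) := by
  intro c hc b hb hcb
  have hb₁ : 1 < b := (one_lt_exp_iff.2 one_pos).trans_le hb
  have hb₀ : 0 < log b / b := div_pos (log_pos hb₁) (by linarith)
  dsimp only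
  rw [← inv_div, ← inv_div (log b)]
  exact inv_anti₀ hb₀ (log_div_self_antitoneOn hc hb hcb)

lemma div_max_one_log_mono {a b : ℝ} (ha : 0 ≤ a) (hab : a ≤ b) :
    a / max 1 (log a) ≤ b / max 1 (log b) := by
  rcases le_or_gt (log b) 1 with hb | hb
  · rw [max_eq_left hb, div_one]
    exact (div_le_self ha (le_max_left _ _)).trans hab
  have hb₀ : 0 < b := by
    by_contra! hb₀
    rw [le_antisymm hb₀ (ha.trans hab), log_zero] at hb
    linarith
  have he : exp 1 ≤ b := ((lt_log_iff_exp_lt hb₀).1 hb).le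
  rw [max_eq_right hb.le]
  rcases le_or_gt (log a) 1 with ha' | ha'
  · have hae : a ≤ exp 1 := by
      rcases ha.eq_or_lt with rfl | ha₀
      · positivity
      · exact (log_le_iff_le_exp ha₀).1 ha'
    calc a / max 1 (log a) = a := by rw [max_eq_left ha', div_one]
      _ ≤ exp 1 / log (exp 1) := by rwa [log_exp, div_one]
      _ ≤ b / log b := div_log_monotoneOn Set.self_mem_Ici he he
  · have ha₀ : 0 < a := ha.lt_of_ne (by rintro rfl; norm_num at ha')
    have hae : exp 1 ≤ a := ((lt_log_iff_exp_lt ha₀).1 ha').le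
    rw [max_eq_right ha'.le]
    exact div_log_monotoneOn hae (hae.trans hab) hab

lemma log_div_log2star_mono {s t : ℝ} (hs : 1 ≤ s) (hst : s ≤ t) :
    log s / log2star s ≤ log t / log2star t :=
  div_max_one_log_mono (log_nonneg hs) (log_le_log (by linarith) hst)

lemma log3star_div_log2star_mul_log_mono {s t : ℝ} (hs : exp (exp (-1)) ≤ s) (hst : s ≤ t) :
    log3star s / log2star s * log s ≤ log3star t / log2star t * log t := by
  have hs₁ : 1 ≤ s := (one_le_exp (exp_pos _).le).trans hs
  have hcomm (u : ℝ) : log3star u / log2star u * log u = log u / log2star u * log3star u := by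
    ring
  rw [hcomm, hcomm]
  exact mul_le_mul (log_div_log2star_mono hs₁ hst) (log3star_mono hs hst)
    (zero_le_one.trans (one_le_log3star s))
    (div_nonneg (log_nonneg (hs₁.trans hst)) (zero_le_one.trans (one_le_log2star t)))

lemma mul_log3star_div_log2star_mul_log_natCast_mono {c : ℝ} (hc : 0 ≤ c) {r R : ℕ}
    (hr : 0 < r) (hrR : r ≤ R) :
    c * (log3star r / log2star r) * log r ≤ c * (log3star R / log2star R) * log R := by
  simp only [mul_assoc]
  refine mul_le_mul_of_nonneg_left ?_ hc
  obtain rfl | hr₂ : r = 1 ∨ 2 ≤ r := by omega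
  · have := one_le_log2star R
    have := one_le_log3star R
    have : (0 : ℝ) ≤ log R := log_natCast_nonneg R
    rw [Nat.cast_one, log_one, mul_zero]
    positivity
  · exact log3star_div_log2star_mul_log_mono
      (exp_exp_neg_one_le_two.trans (by exact_mod_cast hr₂)) (by exact_mod_cast hrR)

lemma natAbs_eq_one_of_isCoprime_of_add_eq_zero {u v : ℤ} (hcop : IsCoprime u v)
    (h : u + v = 0) : u.natAbs = 1 := by
  rw [eq_neg_of_add_eq_zero_right h, IsCoprime.neg_right_iff, isCoprime_self] at hcop
  exact Int.isUnit_iff_natAbs_eq.1 hcop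

lemma natAbs_add_add_natAbs_eq {u v : ℤ} (hvu : v.natAbs ≤ u.natAbs)
    (hw : (u + v).natAbs ≤ u.natAbs) : (u + v).natAbs + v.natAbs = u.natAbs := by
  omega

lemma log_natAbs_le_of_abcTypeBound {κ τ : ℝ} (habc : AbcTypeBound κ) (hτ : 0 < τ) {u v : ℤ}
    (hcop : IsCoprime u v) (hu : 1 < u.natAbs) (hv : v ≠ 0) (hvu : v.natAbs ≤ u.natAbs)
    (hsmall : ((u + v).natAbs : ℝ) ≤
      u.natAbs / exp (log u.natAbs ^ τ * log2star u.natAbs)) :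
    log u.natAbs ≤
      exp (τ⁻¹ * κ * (log3star (rad (v * u)) / log2star (rad (v * u))) * log (rad (v * u))) := by
  have hw : u + v ≠ 0 := fun h ↦ hu.ne' (natAbs_eq_one_of_isCoprime_of_add_eq_zero hcop h)
  have hwu : (u + v).natAbs ≤ u.natAbs := by
    have : (1 : ℝ) ≤ exp (log u.natAbs ^ τ * log2star u.natAbs) :=
      one_le_exp (mul_nonneg (rpow_nonneg (log_natCast_nonneg _) _)
        (zero_le_one.trans (one_le_log2star _)))
    exact_mod_cast hsmall.trans (div_le_self (Nat.cast_nonneg _) this)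
  have hcop' : Nat.Coprime (u + v).natAbs v.natAbs :=
    Int.isCoprime_iff_gcd_eq_one.1 (by simpa using hcop.add_mul_left_left 1)
  have := habc _ _ _ (Int.natAbs_pos.2 hw) (Int.natAbs_pos.2 hv) hcop'
    (natAbs_add_add_natAbs_eq hvu hwu) τ hτ hsmall
  rwa [rad_congr (by simp only [Int.natAbs_mul, Int.natAbs_natCast] :
    ((v.natAbs : ℤ) * u.natAbs).natAbs = (v * u).natAbs)] at this

lemma exists_ne_add_eq_or_eq_neg {ι G : Type*} [Fintype ι] [DecidableEq ι] [AddCommGroup G]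
    (hι : Fintype.card ι = 4) {x : ι → G} (hsum : ∑ k, x k = 0) {i j : ι} (hij : i ≠ j)
    (m : ι) : ∃ q ≠ m, x m + x q = x i + x j ∨ x m + x q = -(x i + x j) := by
  by_cases hmi : m = i
  · exact ⟨j, hmi ▸ hij.symm, .inl (by rw [hmi])⟩
  by_cases hmj : m = j
  · exact ⟨i, hmj ▸ hij, .inl (by rw [hmj, add_comm])⟩
  have hcard : ({i, j}ᶜ : Finset ι).card = 2 := by
    rw [Finset.card_compl, Finset.card_pair hij, hι]
  obtain ⟨a, b, hab, hc⟩ := Finset.card_eq_two.1 hcard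
  have hcompl : x a + x b = -(x i + x j) := by
    have := Finset.sum_add_sum_compl {i, j} x
    rw [hc, Finset.sum_pair hij, Finset.sum_pair hab, hsum] at this
    exact eq_neg_of_add_eq_zero_right this
  have hm : m ∈ ({a, b} : Finset ι) := hc ▸ by simp [hmi, hmj]
  simp only [Finset.mem_insert, Finset.mem_singleton] at hm
  rcases hm with rfl | rfl
  · exact ⟨b, hab.symm, .inr hcompl⟩
  · exact ⟨a, hab, .inr (by rw [add_comm, hcompl])⟩

lemma mul_dvd_prod_univ {ι M : Type*} [Fintype ι] [DecidableEq ι] [CommMonoid M] (x : ι → M)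
    {q m : ι} (h : q ≠ m) : x q * x m ∣ ∏ i, x i := by
  rw [← Finset.prod_pair h]
  exact Finset.prod_dvd_prod_of_subset _ _ _ (Finset.subset_univ _)

theorem stmt_10 (κ : ℝ) (hκ : 0 < κ)
    (habc : ∀ a b c : ℕ, 0 < a → 0 < b → Nat.Coprime a b → a + b = c →
      ∀ τ : ℝ, 0 < τ →
      (a : ℝ) ≤ (c : ℝ) / Real.exp ((Real.log c) ^ τ * log2star c) →
      Real.log c ≤
        Real.exp (τ⁻¹ * κ *
          (log3star (rad (b * c : ℤ)) / log2star (rad (b * c : ℤ))) *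
          Real.log (rad (b * c : ℤ))))
    (x : Fin 4 → ℤ) (hx : ∀ j, x j ≠ 0)
    (hcop : ∀ i j, i ≠ j → IsCoprime (x i) (x j))
    (hsum : x 0 + x 1 + x 2 + x 3 = 0)
    (H : ℝ) (hH : H = ((Finset.univ.sup fun j => (x j).natAbs : ℕ) : ℝ))
    (R : ℕ) (hR : R = rad (x 0 * x 1 * x 2 * x 3))
    (τ : ℝ) (hτ : 0 < τ)
    (hmin : ∃ i j : Fin 4, i < j ∧
      (|x i + x j| : ℝ) ≤ H / Real.exp ((Real.log H) ^ τ * log2star H) ∧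
      ∀ k l : Fin 4, k < l → |x i + x j| ≤ |x k + x l|) :
    Real.log H ≤
      Real.exp (τ⁻¹ * κ * (log3star R / log2star R) * Real.log R) := by
  obtain ⟨i, j, hij, hsmall, -⟩ := hmin
  obtain ⟨m, -, hm⟩ := Finset.exists_mem_eq_sup _ Finset.univ_nonempty fun j ↦ (x j).natAbs
  rw [hm] at hH
  subst hH hR
  rcases le_or_gt (x m).natAbs 1 with hm₁ | hm₁
  · exact (log_nonpos (Nat.cast_nonneg _) (by exact_mod_cast hm₁)).trans (exp_pos _).le
  obtain ⟨q, hqm, hq⟩ := exists_ne_add_eq_or_eq_neg (Fintype.card_fin 4) (x := x)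
    (by rwa [Fin.sum_univ_four]) hij.ne m
  have hqm' : (x q).natAbs ≤ (x m).natAbs :=
    hm ▸ Finset.le_sup (f := fun j ↦ (x j).natAbs) (Finset.mem_univ q)
  have hsmall' : ((x m + x q).natAbs : ℝ) ≤
      (x m).natAbs / exp (log (x m).natAbs ^ τ * log2star (x m).natAbs) := by
    rw [Int.natAbs_eq_natAbs_iff.2 hq, Nat.cast_natAbs]
    push_cast
    exact hsmall
  have hprod : x 0 * x 1 * x 2 * x 3 ≠ 0 := by simp [hx]
  have hdvd : x q * x m ∣ x 0 * x 1 * x 2 * x 3 := by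
    rw [← Fin.prod_univ_four]
    exact mul_dvd_prod_univ x hqm
  refine (log_natAbs_le_of_abcTypeBound habc hτ (hcop m q hqm.symm) hm₁ (hx q) hqm'
    hsmall').trans (exp_le_exp.2 ?_)
  exact mul_log3star_div_log2star_mul_log_natCast_mono (by positivity) (rad_pos _)
    (Nat.le_of_dvd (rad_pos _) (rad_dvd_rad hdvd hprod))
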